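/- Let N ≥ 1, let {ψ_j}_{j=1}^N be an orthonormal basis of ℂ^N, let λ̃₁, …, λ̃_N ≥ 0, and define the operator H = ∑_{j=1}^N λ̃_j ψ_j ψ_j^* (so H ψ_j = λ̃_j ψ_j). Let ξ ∈ ℂ^N with ‖ξ‖₂ = 1, let λ ∈ ℂ, and fix an index i. Assume: (a) ‖ψ_i − ξ‖₂ ≤ ε_v; (b) |1 − λ λ̃_i| ≤ ε_λ; (c) |λ| λ̃_j ≤ K for every j = 1, …, N. Then the approximation error of H on the pair (λ, ξ) satisfies ‖ξ − H(λ ξ)‖₂ ≤ (1 + K) ε_v + ε_λ. -/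

import Mathlib

/-!
Since `H ψ_i = λ̃_i ψ_i`, one has
`ξ - H (λ ξ) = (ξ - ψ_i) + (1 - λ λ̃_i) ψ_i + λ H (ψ_i - ξ)`.
The first two terms have norms at most `ε_v` and `ε_λ`. The operator `λ H` is diagonal in the
orthonormal family `ψ` with entries of modulus at most `K`, so by Bessel's inequality it has
norm at most `K`, and the last term is at most `K ε_v`.
-/

open Matrix

/-- The Euclidean (ℓ²) norm on ℂ^N. -/
noncomputable def l2norm {N : ℕ} (x : Fin N → ℂ) : ℝ :=
  Real.sqrt (∑ i, ‖x i‖ ^ 2)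

open WithLp

section Orthonormal

variable {𝕜 E ι : Type*} [RCLike 𝕜] [NormedAddCommGroup E] [InnerProductSpace 𝕜 E] [Fintype ι]
  {e : ι → E}

theorem Orthonormal.sum_smul_inner_apply_self [DecidableEq ι] (he : Orthonormal 𝕜 e) (c : ι → 𝕜)
    (i : ι) : ∑ j, (c j * inner 𝕜 (e j) (e i)) • e j = c i • e i := by
  simp [orthonormal_iff_ite.mp he]

theorem Orthonormal.norm_sq_sum_smul (he : Orthonormal 𝕜 e) (a : ι → 𝕜) :
    ‖∑ j, a j • e j‖ ^ 2 = ∑ j, ‖a j‖ ^ 2 := by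
  rw [@norm_sq_eq_re_inner 𝕜, he.inner_sum]
  simp only [RCLike.conj_mul, map_sum, ← RCLike.ofReal_pow, RCLike.ofReal_re]

theorem Orthonormal.norm_sum_smul_inner_le (he : Orthonormal 𝕜 e) {c : ι → 𝕜} {K : ℝ}
    (hK : 0 ≤ K) (hc : ∀ j, ‖c j‖ ≤ K) (v : E) :
    ‖∑ j, (c j * inner 𝕜 (e j) v) • e j‖ ≤ K * ‖v‖ := by
  refine le_of_sq_le_sq ?_ (by positivity)
  calc ‖∑ j, (c j * inner 𝕜 (e j) v) • e j‖ ^ 2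
      = ∑ j, ‖c j‖ ^ 2 * ‖inner 𝕜 (e j) v‖ ^ 2 := by
        simp only [he.norm_sq_sum_smul, norm_mul, mul_pow]
    _ ≤ ∑ j, K ^ 2 * ‖inner 𝕜 (e j) v‖ ^ 2 := by
        gcongr with j
        exact hc j
    _ = K ^ 2 * ∑ j, ‖inner 𝕜 (e j) v‖ ^ 2 := (Finset.mul_sum ..).symm
    _ ≤ (K * ‖v‖) ^ 2 := by
        rw [mul_pow]
        gcongr
        exact he.sum_inner_products_le v

end Orthonormal

theorem norm_sub_apply_smul_le_of_apply_eq_smul {𝕜 E : Type*} [NormedField 𝕜]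
    [SeminormedAddCommGroup E] [NormedSpace 𝕜 E] (T : E →ₗ[𝕜] E) {ψ ξ : E} {μ lam : 𝕜} {K : ℝ}
    (hψ : T ψ = μ • ψ) (hT : ‖lam • T (ψ - ξ)‖ ≤ K * ‖ψ - ξ‖) :
    ‖ξ - T (lam • ξ)‖ ≤ (1 + K) * ‖ψ - ξ‖ + ‖1 - lam * μ‖ * ‖ψ‖ := by
  have hdecomp : ξ - T (lam • ξ) = -(ψ - ξ) + ((1 - lam * μ) • ψ + lam • T (ψ - ξ)) := by
    rw [map_sub, hψ, map_smul]
    module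
  calc ‖ξ - T (lam • ξ)‖
      ≤ ‖ψ - ξ‖ + (‖(1 - lam * μ) • ψ‖ + ‖lam • T (ψ - ξ)‖) := by
        rw [hdecomp, ← norm_neg (ψ - ξ)]
        exact (norm_add_le _ _).trans (add_le_add_right (norm_add_le _ _) _)
    _ ≤ (1 + K) * ‖ψ - ξ‖ + ‖1 - lam * μ‖ * ‖ψ‖ := by
        rw [norm_smul]
        linarith

theorem l2norm_eq_norm_toLp {N : ℕ} (x : Fin N → ℂ) : l2norm x = ‖toLp 2 x‖ := by
  rw [EuclideanSpace.norm_eq]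
  rfl

theorem orthonormal_toLp_iff {𝕜 ι : Type*} [RCLike 𝕜] [Fintype ι] {κ : Type*} [DecidableEq κ]
    (ψ : κ → ι → 𝕜) :
    Orthonormal 𝕜 (fun j => toLp 2 (ψ j)) ↔ ∀ j k, star (ψ j) ⬝ᵥ ψ k = if j = k then 1 else 0 := by
  simp [orthonormal_iff_ite, EuclideanSpace.inner_toLp_toLp, dotProduct_comm]

theorem toLp_sum_smul_vecMulVec_mulVec {𝕜 ι κ : Type*} [RCLike 𝕜] [Fintype ι] [Fintype κ]
    (ψ : κ → ι → 𝕜) (c : κ → 𝕜) (v : ι → 𝕜) :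
    toLp 2 ((∑ j, c j • vecMulVec (ψ j) (star (ψ j))) *ᵥ v)
      = ∑ j, (c j * inner 𝕜 (toLp 2 (ψ j)) (toLp 2 v)) • toLp 2 (ψ j) := by
  ext k
  simp [EuclideanSpace.inner_toLp_toLp, Matrix.sum_mulVec, Matrix.smul_mulVec, vecMulVec_mulVec,
    dotProduct_comm v, mul_assoc]

theorem meta_requirements_imply_H_approximation_general
    {N : ℕ}
    (ψ : Fin N → Fin N → ℂ)
    (h_on : ∀ j k : Fin N, star (ψ j) ⬝ᵥ ψ k = if j = k then 1 else 0)
    (lamTilde : Fin N → ℝ) (hlam : ∀ j, 0 ≤ lamTilde j)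
    (H : Matrix (Fin N) (Fin N) ℂ)
    (hH : H = ∑ j : Fin N, (lamTilde j : ℂ) • Matrix.vecMulVec (ψ j) (star (ψ j)))
    (ξ : Fin N → ℂ)
    (lam : ℂ) (i : Fin N)
    (εv εl K : ℝ)
    (ha : l2norm (ψ i - ξ) ≤ εv)
    (hb : ‖1 - lam * (lamTilde i : ℂ)‖ ≤ εl)
    (hc : ∀ j : Fin N, ‖lam‖ * lamTilde j ≤ K) :
    l2norm (ξ - H.mulVec (lam • ξ)) ≤ (1 + K) * εv + εl := by
  set e : Fin N → EuclideanSpace ℂ (Fin N) := fun j => toLp 2 (ψ j)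
  set T := Matrix.toLpLin 2 2 H
  have he : Orthonormal ℂ e := (orthonormal_toLp_iff ψ).mpr h_on
  have hT (w : EuclideanSpace ℂ (Fin N)) :
      T w = ∑ j, ((lamTilde j : ℂ) * inner ℂ (e j) w) • e j := by
    rw [show T w = toLp 2 (H *ᵥ w.ofLp) from rfl, hH]
    exact toLp_sum_smul_vecMulVec_mulVec ψ _ w.ofLp
  have hK : 0 ≤ K := (mul_nonneg (norm_nonneg lam) (hlam i)).trans (hc i)
  have hψ : T (e i) = (lamTilde i : ℂ) • e i := by
    rw [hT]
    exact he.sum_smul_inner_apply_self _ i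
  have hbound : ‖lam • T (e i - toLp 2 ξ)‖ ≤ K * ‖e i - toLp 2 ξ‖ := by
    rw [hT, Finset.smul_sum]
    simp_rw [smul_smul, ← mul_assoc]
    refine he.norm_sum_smul_inner_le hK (fun j => ?_) _
    simpa [abs_of_nonneg (hlam j)] using hc j
  rw [l2norm_eq_norm_toLp] at ha ⊢
  calc ‖toLp 2 (ξ - H *ᵥ (lam • ξ))‖
      ≤ (1 + K) * ‖e i - toLp 2 ξ‖ + ‖1 - lam * (lamTilde i : ℂ)‖ * ‖e i‖ :=
        norm_sub_apply_smul_le_of_apply_eq_smul T hψ hbound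
    _ ≤ (1 + K) * εv + εl := by
        rw [he.1 i, mul_one]
        gcongr
        exact ha

/-- **Meta-subnet requirements imply the approximation property of `H`.**
Let `{ψ_j}` be an orthonormal basis of ℂ^N, let `λ̃_j ≥ 0`, and let
`H = ∑_j λ̃_j ψ_j ψ_j*` be the operator diagonal in this basis. If `‖ψ_i − ξ‖₂ ≤ ε_v`
(with `‖ξ‖₂ = 1`), `|1 − λ λ̃_i| ≤ ε_λ`, and `|λ| λ̃_j ≤ K` for all `j`, then
`‖ξ − H (λ ξ)‖₂ ≤ (1 + K) ε_v + ε_λ`. -/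
theorem meta_requirements_imply_H_approximation
    {N : ℕ} (hN : 1 ≤ N)
    (ψ : Fin N → Fin N → ℂ)
    (h_on : ∀ j k : Fin N, star (ψ j) ⬝ᵥ ψ k = if j = k then 1 else 0)
    (lamTilde : Fin N → ℝ) (hlam : ∀ j, 0 ≤ lamTilde j)
    (H : Matrix (Fin N) (Fin N) ℂ)
    (hH : H = ∑ j : Fin N, (lamTilde j : ℂ) • Matrix.vecMulVec (ψ j) (star (ψ j)))
    (ξ : Fin N → ℂ) (hξ : l2norm ξ = 1)
    (lam : ℂ) (i : Fin N)
    (εv εl K : ℝ)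
    (ha : l2norm (ψ i - ξ) ≤ εv)
    (hb : ‖1 - lam * (lamTilde i : ℂ)‖ ≤ εl)
    (hc : ∀ j : Fin N, ‖lam‖ * lamTilde j ≤ K) :
    l2norm (ξ - H.mulVec (lam • ξ)) ≤ (1 + K) * εv + εl :=
  meta_requirements_imply_H_approximation_general ψ h_on lamTilde hlam H hH ξ lam i εv εl K ha hb hc
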